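/- Let A be a DFA over the alphabet Bool with finite state set Q such that the accepted language L(A) is contained in D. Then L(A) is finite and its cardinality is at most |Q|. -/
import Mathlib


/-- The morphism β with β(0)=01, β(1)=10, extended to words. -/
def beta (x : List Bool) : List Bool := x.flatMap (fun b => [b, !b])

/-- The map ex : x ↦ β(x)·11·0^(|x|²+3)·β(x)·11·0^(|x|²+3). -/
def ex (x : List Bool) : List Bool :=
  beta x ++ [true, true] ++ List.replicate (x.length ^ 2 + 3) false ++
  beta x ++ [true, true] ++ List.replicate (x.length ^ 2 + 3) false

/-- D is the image of ex. -/
def D : Set (List Bool) := Set.range ex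

/-- First half of `ex x`. -/
def half (x : List Bool) : List Bool :=
  beta x ++ [true, true] ++ List.replicate (x.length ^ 2 + 3) false

lemma ex_eq_half (x : List Bool) : ex x = half x ++ half x := by
  simp [ex, half, List.append_assoc]

lemma beta_cons (a : Bool) (x : List Bool) : beta (a :: x) = a :: (!a) :: beta x := rfl

lemma beta_length (x : List Bool) : (beta x).length = 2 * x.length := by
  induction x with
  | nil => rfl
  | cons a x ih => simp [beta_cons, ih]; omega

lemma beta_inj : Function.Injective beta := by
  intro x
  induction x with
  | nil =>
    intro y h
    cases y with
    | nil => rfl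
    | cons b y => simp [beta, beta_cons] at h
  | cons a x ih =>
    intro y h
    cases y with
    | nil => simp [beta, beta_cons] at h
    | cons b y =>
      rw [beta_cons, beta_cons] at h
      injection h with h1 h
      injection h with _ h3
      rw [h1, ih h3]

/-- number of trailing `false`s -/
def tz (w : List Bool) : ℕ := (w.reverse.takeWhile (fun b => !b)).length

lemma takeWhile_rep (k : ℕ) (s : List Bool) :
    List.takeWhile (fun b => !b) (List.replicate k false ++ true :: s)
      = List.replicate k false := by
  induction k with
  | zero => simp [List.takeWhile_cons]
  | succ n ih => simp [List.replicate_succ, List.takeWhile_cons, ih]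

lemma tz_spec (a : List Bool) (k : ℕ) :
    tz (a ++ true :: List.replicate k false) = k := by
  unfold tz
  have : (a ++ true :: List.replicate k false).reverse
      = List.replicate k false ++ true :: a.reverse := by
    simp [List.reverse_append, List.reverse_cons, List.append_assoc]
  rw [this, takeWhile_rep, List.length_replicate]

lemma sq_inj {m n : ℕ} (h : m ^ 2 = n ^ 2) : m = n := by
  rcases Nat.lt_trichotomy m n with hlt | he | hgt
  · have := Nat.pow_lt_pow_left hlt (n := 2) (by norm_num)
    omega
  · exact he
  · have := Nat.pow_lt_pow_left hgt (n := 2) (by norm_num)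
    omega

lemma sq_add_inj {m n : ℕ} (h : m ^ 2 + 2 * m = n ^ 2 + 2 * n) : m = n := by
  rcases Nat.lt_trichotomy m n with hlt | he | hgt
  · have := Nat.pow_lt_pow_left hlt (n := 2) (by norm_num)
    omega
  · exact he
  · have := Nat.pow_lt_pow_left hgt (n := 2) (by norm_num)
    omega

lemma half_length (x : List Bool) :
    (half x).length = x.length ^ 2 + 2 * x.length + 5 := by
  simp [half, beta_length]
  ring

lemma half_decomp (x y : List Bool) :
    half x ++ half y
      = (half x ++ (beta y ++ [true])) ++ true :: List.replicate (y.length ^ 2 + 3) false := by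
  simp [half, List.append_assoc]

lemma key (x y z : List Bool) (h : half x ++ half y = half z ++ half z) : x = y := by
  -- trailing zeros give y.length = z.length
  have ht : tz (half x ++ half y) = tz (half z ++ half z) := by rw [h]
  rw [half_decomp x y, half_decomp z z, tz_spec, tz_spec] at ht
  have hyz : y.length = z.length := sq_inj (by omega)
  -- lengths give x.length = z.length
  have hlen : (half x).length + (half y).length = (half z).length + (half z).length := by
    have := congrArg List.length h
    simpa using this
  rw [half_length, half_length, half_length, hyz] at hlen
  have hxz : x.length = z.length := sq_add_inj (by omega)
  -- split
  have hsplit : half x = half z ∧ half y = half z :=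
    List.append_inj h (by rw [half_length, half_length, hxz])
  have hx : x = z := by
    have := hsplit.1
    unfold half at this
    rw [hxz] at this
    have hb : beta x = beta z := by
      exact (List.append_inj (List.append_inj this (by simp [beta_length, hxz])).1
        (by simp [beta_length, hxz])).1
    exact beta_inj hb
  have hy : y = z := by
    have := hsplit.2
    unfold half at this
    rw [hyz] at this
    have hb : beta y = beta z := by
      exact (List.append_inj (List.append_inj this (by simp [beta_length, hyz])).1
        (by simp [beta_length, hyz])).1
    exact beta_inj hb
  rw [hx, hy]

/-- If a DFA accepts a language contained in D, then the language is finite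
with at most |Q| elements. -/
theorem stmt_6 (Q : Type) [Fintype Q] (A : DFA Bool Q)
    (h : ∀ w ∈ A.accepts, w ∈ D) :
    (A.accepts : Set (List Bool)).Finite ∧
      (A.accepts : Set (List Bool)).ncard ≤ Fintype.card Q := by
  classical
  have hex : ∀ w ∈ A.accepts, ∃ x, w = ex x := by
    intro w hw
    obtain ⟨x, hx⟩ := h w hw
    exact ⟨x, hx.symm⟩
  choose g hg using hex
  set F : {w : List Bool // w ∈ A.accepts} → Q :=
    fun w => A.eval (half (g w.1 w.2)) with hF
  have hinj : Function.Injective F := by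
    rintro ⟨w₁, h₁⟩ ⟨w₂, h₂⟩ heq
    simp only [hF] at heq
    set x₁ := g w₁ h₁
    set x₂ := g w₂ h₂
    have hw₁ : w₁ = ex x₁ := hg w₁ h₁
    have hw₂ : w₂ = ex x₂ := hg w₂ h₂
    -- half x₁ ++ half x₂ is accepted
    have hacc : half x₁ ++ half x₂ ∈ A.accepts := by
      rw [DFA.mem_accepts]
      have e1 : A.eval (half x₁ ++ half x₂)
          = A.evalFrom (A.eval (half x₁)) (half x₂) :=
        A.evalFrom_of_append A.start _ _
      have e2 : A.eval (half x₂ ++ half x₂)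
          = A.evalFrom (A.eval (half x₂)) (half x₂) :=
        A.evalFrom_of_append A.start _ _
      rw [e1, heq, ← e2, ← ex_eq_half, ← hw₂]
      exact h₂
    obtain ⟨z, hz⟩ := h _ hacc
    rw [ex_eq_half] at hz
    have : x₁ = x₂ := key x₁ x₂ z hz.symm
    apply Subtype.ext
    show w₁ = w₂
    rw [hw₁, hw₂, this]
  have hfin : Finite {w : List Bool // w ∈ A.accepts} := Finite.of_injective F hinj
  refine ⟨Set.finite_coe_iff.mp hfin, ?_⟩
  have hle := Nat.card_le_card_of_injective F hinj
  rw [Nat.card_eq_fintype_card (α := Q)] at hle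
  calc (A.accepts : Set (List Bool)).ncard
      = Nat.card {w : List Bool // w ∈ A.accepts} :=
        (Nat.card_coe_set_eq (A.accepts : Set (List Bool))).symm
    _ ≤ Fintype.card Q := hle
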